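/- arXiv:2404.03418 — 4 statements merged into one kernel-verified Lean document; each statement's English description precedes it below -/
import Mathlib

section
/- The updated model M|_{a▷b} is still a model: the updated relation R*_b is an equivalence relation. -/
/-- s ≡_{a:w} u iff s and u agree on every proposition known by agent a at w. -/
def eqvAt {W : Type} (Ra : W → W → Prop) (w s u : W) : Prop :=
  ∀ X : Set W, (∀ v, Ra w v → v ∈ X) → (s ∈ X ↔ u ∈ X)

/-- The updated relation R*_b of the (a▷b)-update at w: on the R_b-class of w
it is R_b ∩ ≡_{a:w}; outside that class it is R_b. -/
def RstarAt {W : Type} (Ra Rb : W → W → Prop) (w s u : W) : Prop :=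
  (Rb w s ∧ Rb w u ∧ Rb s u ∧ eqvAt Ra w s u) ∨
  (¬ Rb w s ∧ ¬ Rb w u ∧ Rb s u)

/-- The updated model M|_{a▷b} is still a model: the updated relation R*_b is
an equivalence relation. -/
theorem updated_relation_equivalence {W : Type} (Ra Rb : W → W → Prop)
    (hRa : Equivalence Ra) (hRb : Equivalence Rb) (w : W) :
    Equivalence (RstarAt Ra Rb w) := by
  constructor
  · intro x
    by_cases h : Rb w x
    · exact Or.inl ⟨h, h, hRb.refl x, fun X _ => Iff.rfl⟩
    · exact Or.inr ⟨h, h, hRb.refl x⟩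
  · rintro x y (⟨h1, h2, h3, h4⟩ | ⟨h1, h2, h3⟩)
    · exact Or.inl ⟨h2, h1, hRb.symm h3, fun X hX => (h4 X hX).symm⟩
    · exact Or.inr ⟨h2, h1, hRb.symm h3⟩
  · rintro x y z (⟨h1, h2, h3, h4⟩ | ⟨h1, h2, h3⟩) (⟨g1, g2, g3, g4⟩ | ⟨g1, g2, g3⟩)
    · exact Or.inl ⟨h1, g2, hRb.trans h3 g3, fun X hX => (h4 X hX).trans (g4 X hX)⟩
    · exact absurd h2 g1
    · exact absurd g1 h2
    · exact Or.inr ⟨h1, g2, hRb.trans h3 g3⟩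
end

section
/- The rule Inc is sound: if for all models and states, M,w ⊨ φ implies M|_{a▷b}, w ⊨ ψ, then for all models and states, M,w ⊨ K_a φ implies M,w ⊨ [a▷b]K_b ψ. -/
/-- A Kripke model: agent-indexed accessibility relations and a valuation. -/
structure KModel (I P W : Type) where
  R : I → W → W → Prop
  V : P → Set W

/-- A model in the sense of the paper: all relations are equivalence relations. -/
def IsModel {I P W : Type} (M : KModel I P W) : Prop := ∀ i, Equivalence (M.R i)

/-- s ≡_a u iff s and u agree on all formulas of the form K_a φ. -/
def agrees {I P W : Type} (M : KModel I P W) (a : I) (s u : W) : Prop :=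
  ∀ X : Set W, (∀ v, M.R a s v → v ∈ X) ↔ (∀ v, M.R a u v → v ∈ X)

/-- The updated relation R*_b of the (a▷b)-update at w: on the R_b-class of w
it is R_b ∩ ≡_{a:w}; outside that class it is R_b. -/
def Rstar {I P W : Type} (M : KModel I P W) (a b : I) (w s u : W) : Prop :=
  (M.R b w s ∧ M.R b w u ∧ M.R b s u ∧ agrees M a s u) ∨
  (¬ M.R b w s ∧ ¬ M.R b w u ∧ M.R b s u)

/-- The (a▷b)-updated model M|_{a▷b} at w: only R_b changes, to R*_b. -/
def update {I P W : Type} [DecidableEq I] (M : KModel I P W) (a b : I) (w : W) :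
    KModel I P W :=
  ⟨fun i => if i = b then Rstar M a b w else M.R i, M.V⟩

/-- M,w ⊨ [a▷b]φ iff M|_{a▷b}, w ⊨ φ (φ a proposition over pointed models). -/
def box {I P W : Type} [DecidableEq I] (a b : I)
    (φ : KModel I P W → W → Prop) (M : KModel I P W) (w : W) : Prop :=
  φ (update M a b w) w

/-- The rule Inc is sound: if for all models and states M,w ⊨ φ implies
M|_{a▷b}, w ⊨ ψ, then for all models and states M,w ⊨ K_a φ implies
M,w ⊨ [a▷b]K_b ψ. -/
theorem inc_rule_sound {I P W : Type} [DecidableEq I] (a b : I)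
    (φ ψ : KModel I P W → W → Prop)
    (h : ∀ (M : KModel I P W) (w : W), IsModel M → φ M w → ψ (update M a b w) w) :
    ∀ (M : KModel I P W) (w : W), IsModel M →
      (∀ u, M.R a w u → φ M u) →
      (∀ u, (update M a b w).R b w u → ψ (update M a b w) u) := by
  intro M w hM hK u hu
  have hb := hM b
  have hu' : Rstar M a b w w u := by unfold update at hu; simp only [if_pos rfl] at hu; exact hu
  rcases hu' with ⟨h1, h2, h3, hag⟩ | ⟨h1, _, _⟩
  · have hφ : φ M u := ((hag {v | φ M v}).mp hK) u ((hM a).refl u)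
    have hψ := h M u hM hφ
    have hRb : ∀ s, M.R b w s ↔ M.R b u s :=
      fun s => ⟨fun hs => hb.trans (hb.symm h2) hs, fun hs => hb.trans h2 hs⟩
    have heq : update M a b u = update M a b w := by
      unfold update
      congr 1
      funext i s t
      by_cases hi : i = b
      · subst hi
        simp only [eq_self_iff_true, if_true, Rstar, hRb]
      · simp [hi]
    rwa [heq] at hψ
  · exact absurd (hb.refl w) h1
end

section
/- The Sharing property holds: for purely Boolean φ, K_a φ → [a▷b]K_b φ is valid, i.e., if R_a[w] ⊆ ||φ|| in M then R*_b[w] ⊆ ||φ||* in M|_{a▷b}. -/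
/-- Purely propositional (Boolean) formulas: atoms, negation, conjunction. -/
inductive BForm (P : Type) : Type
  | atom : P → BForm P
  | neg : BForm P → BForm P
  | conj : BForm P → BForm P → BForm P

/-- Truth of a Boolean formula at a state of a model. -/
def bsat {I P W : Type} (M : KModel I P W) (w : W) : BForm P → Prop
  | .atom p => w ∈ M.V p
  | .neg φ => ¬ bsat M w φ
  | .conj φ ψ => bsat M w φ ∧ bsat M w ψ


lemma bsat_update {I P W : Type} [DecidableEq I] (M : KModel I P W) (a b : I)
    (w u : W) (φ : BForm P) : bsat (update M a b w) u φ ↔ bsat M u φ := by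
  induction φ generalizing u with
  | atom p => rfl
  | neg ψ ih => exact not_congr (ih u)
  | conj ψ χ ih1 ih2 => exact and_congr (ih1 u) (ih2 u)

/-- The Sharing property: for purely Boolean φ, K_a φ → [a▷b]K_b φ is valid:
if R_a[w] ⊆ ||φ|| in M, then R*_b[w] ⊆ ||φ||* in M|_{a▷b}. -/
theorem sharing_property {I P W : Type} [DecidableEq I]
    (M : KModel I P W) (hM : IsModel M) (a b : I) (w : W) (φ : BForm P)
    (h : ∀ u, M.R a w u → bsat M u φ) :
    ∀ u, (update M a b w).R b w u → bsat (update M a b w) u φ := by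
  intro u hu
  rw [bsat_update]
  simp only [update, if_pos rfl] at hu
  rcases hu with ⟨_, _, _, hag⟩ | ⟨hw, _, _⟩
  · exact (hag {v | bsat M v φ}).mp h u ((hM a).refl u)
  · exact absurd ((hM b).refl w) hw
end

section
/- The Dist property holds: [a▷b]K_b φ → D_{{a,b}}[a▷b]φ is valid, i.e., if R*_b[w] ⊆ ||φ||* in the updated model, then (R_a ∩ R_b)[w] ⊆ ||[a▷b]φ||. -/
/-- The Dist property: [a▷b]K_b φ → D_{{a,b}}[a▷b]φ is valid: if
R*_b[w] ⊆ ||φ||* in the updated model then (R_a ∩ R_b)[w] ⊆ ||[a▷b]φ||. -/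
theorem dist_property {I P W : Type} [DecidableEq I]
    (M : KModel I P W) (hM : IsModel M) (a b : I) (w : W)
    (φ : KModel I P W → W → Prop)
    (h : ∀ u, (update M a b w).R b w u → φ (update M a b w) u) :
    ∀ u, M.R a w u ∧ M.R b w u → box a b φ M u := by
  rintro u ⟨hau, hbu⟩
  have hb := hM b
  have ha := hM a
  have hclass : ∀ s, M.R b w s ↔ M.R b u s := fun s =>
    ⟨fun h' => hb.trans (hb.symm hbu) h', fun h' => hb.trans hbu h'⟩
  have hRstar : Rstar M a b w = Rstar M a b u := by
    funext s t
    simp only [Rstar, hclass]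
  have hupd : update M a b w = update M a b u := by
    simp only [update, hRstar]
  have hag : agrees M a w u := by
    intro X
    constructor
    · intro hX v hv; exact hX v (ha.trans hau hv)
    · intro hX v hv; exact hX v (ha.trans (ha.symm hau) hv)
  have hst : (update M a b w).R b w u := by
    show (if b = b then Rstar M a b w else M.R b) w u
    rw [if_pos rfl]
    exact Or.inl ⟨hb.refl w, hbu, hbu, hag⟩
  have := h u hst
  rw [hupd] at this
  exact this
end
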